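/- arXiv:1805.06309 — 6 statements merged into one kernel-verified Lean document; each statement's English description precedes it below -/
import Mathlib

section
/- Let q = 4 and let k be a positive even integer. Let F be a finite field with |F| = q^{3k}. Then the map g : F → F defined by g(x) = S_{k+1}(x)^2 + S_{2k}(x)^{q^k + 1} is a permutation of F (i.e., g is bijective). -/
/-- `S q m x = x + x^q + x^{q^2} + ⋯ + x^{q^{m-1}}`. -/
def S {F : Type*} [Field F] (q m : ℕ) (x : F) : F :=
  ∑ i ∈ Finset.range m, x ^ q ^ i

section Helpers
variable {F : Type*} [Field F]

private lemma powc (a : F) (m n : ℕ) : (a ^ m) ^ n = (a ^ n) ^ m := by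
  rw [← pow_mul, mul_comm, pow_mul]

private lemma fix4 (z : F) (hz : z ^ 4 = z) : ∀ j, z ^ 4 ^ j = z
  | 0 => pow_one z
  | j + 1 => by rw [pow_succ, pow_mul, fix4 z hz j, hz]

private lemma addQ [CharP F 2] (m : ℕ) (x y : F) : (x + y) ^ 4 ^ m = x ^ 4 ^ m + y ^ 4 ^ m := by
  have h : (4 : ℕ) ^ m = 2 ^ (2 * m) := by rw [pow_mul]; norm_num
  rw [h, add_pow_char_pow]

private lemma S_add [CharP F 2] (m : ℕ) (x y : F) : S 4 m (x + y) = S 4 m x + S 4 m y := by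
  unfold S
  rw [← Finset.sum_add_distrib]
  exact Finset.sum_congr rfl fun i _ => addQ i x y

private lemma S_pow [CharP F 2] (m j : ℕ) (x : F) : (S 4 m x) ^ 4 ^ j = S 4 m (x ^ 4 ^ j) := by
  induction m with
  | zero => simp [S]
  | succ n ih =>
    rw [S, Finset.sum_range_succ, ← S, addQ, ih, S, S, Finset.sum_range_succ, powc]

private lemma S_pow4 [CharP F 2] (m : ℕ) (x : F) : (S 4 m x) ^ 4 = S 4 m (x ^ 4) := by
  have := S_pow m 1 x
  norm_num at this
  exact this

private lemma S_succ (m : ℕ) (x : F) : S 4 (m + 1) x = S 4 m x + x ^ 4 ^ m := by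
  rw [S, Finset.sum_range_succ, ← S]

private lemma S_split [CharP F 2] (m n : ℕ) (x : F) :
    S 4 (m + n) x = S 4 m x + (S 4 n x) ^ 4 ^ m := by
  rw [S_pow]
  induction n with
  | zero => simp [S]
  | succ n ih =>
    rw [show m + (n + 1) = (m + n) + 1 from rfl, S_succ, ih, S_succ]
    rw [← pow_mul, ← pow_add]
    ring

private lemma S_shift (m : ℕ) (x : F) : S 4 m (x ^ 4) = S 4 m x + x ^ 4 ^ m - x := by
  unfold S
  have hc : ∀ i : ℕ, (x ^ 4) ^ 4 ^ i = x ^ 4 ^ (i + 1) := by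
    intro i
    rw [← pow_mul, pow_succ, mul_comm]
  rw [Finset.sum_congr rfl fun i _ => hc i]
  have h1 := Finset.sum_range_succ' (fun i => x ^ 4 ^ i) m
  have h2 := Finset.sum_range_succ (fun i => x ^ 4 ^ i) m
  rw [h2] at h1
  rw [h1]
  norm_num

private lemma S_const (m : ℕ) (x : F) (hx : x ^ 4 = x) : S 4 m x = (m : F) * x := by
  unfold S
  rw [Finset.sum_congr rfl fun i _ => fix4 x hx i, Finset.sum_const, Finset.card_range,
    nsmul_eq_mul]

private lemma S_smul (m : ℕ) (w x : F) (hw : w ^ 4 = w) : S 4 m (w * x) = w * S 4 m x := by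
  unfold S
  rw [Finset.mul_sum]
  exact Finset.sum_congr rfl fun i _ => by rw [mul_pow, fix4 w hw i]

end Helpers

theorem stmt_0 {F : Type*} [Field F] [Fintype F] (k : ℕ) (hk : 0 < k) (hke : Even k)
    (hF : Fintype.card F = 4 ^ (3 * k)) :
    Function.Bijective (fun x : F => S 4 (k + 1) x ^ 2 + S 4 (2 * k) x ^ (4 ^ k + 1)) := by
  classical
  -- characteristic 2
  obtain ⟨n, hp2, hcard⟩ := FiniteField.card F (ringChar F)
  have hrc : ringChar F = 2 := by
    have h1 : ringChar F ∣ 2 ^ (6 * k) := by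
      have he : (ringChar F) ^ (n : ℕ) = 2 ^ (6 * k) := by
        rw [← hcard, hF, show (4 : ℕ) = 2 ^ 2 from rfl, ← pow_mul]
        congr 1; ring
      exact he ▸ dvd_pow_self _ n.2.ne'
    exact (Nat.prime_dvd_prime_iff_eq hp2 Nat.prime_two).mp (hp2.dvd_of_dvd_pow h1)
  haveI hC2 : CharP F 2 := hrc ▸ ringChar.charP F
  have h2 : (2 : F) = 0 := by
    have := CharP.cast_eq_zero F 2
    exact_mod_cast this
  -- the cube root of unity
  haveI : Fact (Nat.Prime 3) := ⟨by norm_num⟩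
  have h3dvd : 3 ∣ Fintype.card Fˣ := by
    rw [Fintype.card_units, hF]
    have hmod : 4 ^ (3 * k) % 3 = 1 := by
      rw [Nat.pow_mod]; norm_num
    have hpos : 1 ≤ 4 ^ (3 * k) := Nat.one_le_pow _ _ (by norm_num)
    omega
  obtain ⟨g3, hg3⟩ := exists_prime_orderOf_dvd_card 3 h3dvd
  set w : F := (g3 : F) with hwdef
  have hw3 : w ^ 3 = 1 := by
    have h : g3 ^ 3 = 1 := by rw [← hg3]; exact pow_orderOf_eq_one g3
    rw [hwdef, ← Units.val_pow_eq_pow_val, h, Units.val_one]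
  have hwne1 : w ≠ 1 := by
    intro h
    have : g3 = 1 := Units.ext (by rw [Units.val_one, ← hwdef]; exact h)
    rw [this] at hg3; simp at hg3
  have hw : w ^ 2 + w + 1 = 0 := by
    have hz : (w - 1) * (w ^ 2 + w + 1) = 0 := by linear_combination hw3
    rcases mul_eq_zero.mp hz with h | h
    · exact absurd (by linear_combination h : w = 1) hwne1
    · exact h
  have hw0 : w ≠ 0 := by intro h; rw [h] at hw; norm_num at hw
  have hw4 : w ^ 4 = w := by linear_combination (w ^ 2 - w) * hw
  have hw24 : (w ^ 2) ^ 4 = w ^ 2 := by rw [powc, hw4]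
  have hwk : w ^ 4 ^ k = w := fix4 w hw4 k
  have hw2k : (w ^ 2) ^ 4 ^ k = w ^ 2 := by rw [powc, hwk]
  -- Frobenius cubed is the identity
  have hQ3 : ∀ z : F, ((z ^ 4 ^ k) ^ 4 ^ k) ^ 4 ^ k = z := by
    intro z
    rw [← pow_mul, ← pow_mul, show 4 ^ k * (4 ^ k * 4 ^ k) = 4 ^ (3 * k) from by
      rw [← pow_add, ← pow_add]; congr 1; ring, ← hF, FiniteField.pow_card]
  have hkF : (k : F) = 0 := by
    obtain ⟨j, hj⟩ := hke
    subst hj; push_cast; linear_combination (j : F) * h2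
  -- reduce to injectivity
  rw [← Finite.injective_iff_bijective]
  intro x x' hg
  simp only at hg
  set e : F := x + x' with he_def
  have hx' : x' = x + e := by rw [he_def]; linear_combination -x * h2
  set y : F := S 4 k e with hy_def
  set c : F := S 4 (2 * k) e with hc_def
  set A : F := S 4 (k + 1) e with hA_def
  set P : F := S 4 (k + 1) x with hP_def
  set u : F := S 4 (2 * k) x with hu_def
  set yx : F := S 4 k x with hyx_def
  have hgx1 : S 4 (k + 1) x' = P + A := by
    rw [hx', S_add, ← hP_def, ← hA_def]
  have hgx2 : S 4 (2 * k) x' = u + c := by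
    rw [hx', S_add, ← hu_def, ← hc_def]
  rw [hgx1, hgx2, pow_succ u (4 ^ k), pow_succ (u + c) (4 ^ k), addQ] at hg
  have hE : A ^ 2 + c ^ 4 ^ k * c = u ^ 4 ^ k * c + c ^ 4 ^ k * u := by
    linear_combination -hg + (-(c ^ 4 ^ k * u) - c * u ^ 4 ^ k - A * P) * h2
  -- trace-to-K of c and u vanish
  have hcs : c = y + y ^ 4 ^ k := by
    rw [hc_def, hy_def, two_mul, S_split]
  have hus : u = yx + yx ^ 4 ^ k := by
    rw [hu_def, hyx_def, two_mul, S_split]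
  have hcQ1 : c ^ 4 ^ k = y ^ 4 ^ k + (y ^ 4 ^ k) ^ 4 ^ k := by rw [hcs, addQ]
  have hcQ2 : (c ^ 4 ^ k) ^ 4 ^ k = c + c ^ 4 ^ k := by
    rw [hcQ1, addQ, hQ3 y, hcs]
    linear_combination -(y ^ 4 ^ k) * h2
  have huQ1 : u ^ 4 ^ k = yx ^ 4 ^ k + (yx ^ 4 ^ k) ^ 4 ^ k := by rw [hus, addQ]
  have huQ2 : (u ^ 4 ^ k) ^ 4 ^ k = u + u ^ 4 ^ k := by
    rw [huQ1, addQ, hQ3 yx, hus]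
    linear_combination -(yx ^ 4 ^ k) * h2
  have hXQ : (u ^ 4 ^ k * c + c ^ 4 ^ k * u) ^ 4 ^ k = u ^ 4 ^ k * c + c ^ 4 ^ k * u := by
    rw [addQ, mul_pow, mul_pow, huQ2, hcQ2]
    linear_combination (c ^ 4 ^ k * u ^ 4 ^ k) * h2
  have hGQ : (A ^ 2 + c ^ 4 ^ k * c) ^ 4 ^ k = A ^ 2 + c ^ 4 ^ k * c := by
    rw [hE]; exact hXQ
  -- eigencomponents of e
  set E1 : F := e ^ 4 ^ k with hE1
  set E2 : F := E1 ^ 4 ^ k with hE2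
  have hE2Q : E2 ^ 4 ^ k = e := by rw [hE2, hE1]; exact hQ3 e
  set b : F := e + w ^ 2 * E1 + w * E2 with hb_def
  set d : F := e + w * E1 + w ^ 2 * E2 with hd_def
  set e0 : F := e + E1 + E2 with he0_def
  have hbQ : b ^ 4 ^ k = w * b := by
    rw [hb_def, addQ, addQ, mul_pow, mul_pow, hw2k, hwk, hE2Q, ← hE1, ← hE2]
    linear_combination (E1 - w * E1) * hw
  have hdQ : d ^ 4 ^ k = w ^ 2 * d := by
    rw [hd_def, addQ, addQ, mul_pow, mul_pow, hw2k, hwk, hE2Q, ← hE1, ← hE2]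
    linear_combination (E1 + w * E2 - w * E1 - w ^ 2 * E2) * hw
  have he0Q : e0 ^ 4 ^ k = e0 := by
    rw [he0_def, addQ, addQ, hE2Q, ← hE1, ← hE2]
    ring
  have hesum : e = e0 + b + d := by
    rw [he0_def, hb_def, hd_def]
    linear_combination -e * h2 + (-E2 - E1) * hw
  -- eigencomponents of y
  set yb : F := S 4 k b with hyb_def
  set yd : F := S 4 k d with hyd_def
  set y0 : F := S 4 k e0 with hy0_def
  have hybQ : yb ^ 4 ^ k = w * yb := by
    rw [hyb_def, S_pow, hbQ, S_smul _ _ _ hw4]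
  have hydQ : yd ^ 4 ^ k = w ^ 2 * yd := by
    rw [hyd_def, S_pow, hdQ, S_smul _ _ _ hw24]
  have hy0Q : y0 ^ 4 ^ k = y0 := by
    rw [hy0_def, S_pow, he0Q]
  have hysum : y = y0 + yb + yd := by
    rw [hy_def, hy0_def, hyb_def, hyd_def, ← S_add, ← S_add]
    exact congrArg _ hesum
  have hyQdec : y ^ 4 ^ k = y0 + w * yb + w ^ 2 * yd := by
    rw [hysum, addQ, addQ, hy0Q, hybQ, hydQ]
  have hcdec : c = w ^ 2 * yb + w * yd := by
    rw [hcs, hyQdec, hysum]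
    linear_combination (yb + y0 - w * yd + w * yb) * h2 + (yd - yb) * hw
  have hcQdec : c ^ 4 ^ k = yb + yd := by
    rw [hcdec, addQ, mul_pow, mul_pow, hw2k, hwk, hybQ, hydQ]
    linear_combination (-yd - yb + w * yd + w * yb) * hw
  -- eigencomponents of A
  have hAs : A = y + E1 := by
    rw [hA_def, S_succ, ← hy_def, ← hE1]
  have hE1dec : E1 = e0 + w * b + w ^ 2 * d := by
    rw [hE1, hesum, addQ, addQ, he0Q, hbQ, hdQ]
  set A1 : F := y0 + e0 with hA1_def
  set Aw : F := yb + w * b with hAw_def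
  set Ad : F := yd + w ^ 2 * d with hAd_def
  have hAdec : A = A1 + Aw + Ad := by
    rw [hAs, hysum, hE1dec, hA1_def, hAw_def, hAd_def]; ring
  have hA1Q : A1 ^ 4 ^ k = A1 := by rw [hA1_def, addQ, hy0Q, he0Q]
  have hAwQ : Aw ^ 4 ^ k = w * Aw := by
    rw [hAw_def, addQ, mul_pow, hwk, hybQ, hbQ]; ring
  have hAdQ : Ad ^ 4 ^ k = w ^ 2 * Ad := by
    rw [hAd_def, addQ, mul_pow, hw2k, hydQ, hdQ]; ring
  -- eigencomponents of G
  set G1 : F := A1 ^ 2 + yb * yd with hG1_def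
  set Gw : F := Ad ^ 2 + w * yd ^ 2 with hGw_def
  set Gd : F := Aw ^ 2 + w ^ 2 * yb ^ 2 with hGd_def
  have hGsum : A ^ 2 + c ^ 4 ^ k * c = G1 + Gw + Gd := by
    rw [hAdec, hcQdec, hcdec, hG1_def, hGw_def, hGd_def]
    linear_combination (-(yb * yd) + Aw * Ad + A1 * Ad + A1 * Aw) * h2 + (yb * yd) * hw
  have hG1Q : G1 ^ 4 ^ k = G1 := by
    rw [hG1_def, addQ, mul_pow, powc A1 2, hA1Q, hybQ, hydQ]
    linear_combination (-(yb * yd) + w * yb * yd) * hw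
  have hGwQ : Gw ^ 4 ^ k = w * Gw := by
    rw [hGw_def, addQ, mul_pow, powc Ad 2, powc yd 2, hAdQ, hydQ, hwk]
    linear_combination (-(w * Ad ^ 2) - w ^ 2 * yd ^ 2 + w ^ 2 * Ad ^ 2 + w ^ 3 * yd ^ 2) * hw
  have hGdQ : Gd ^ 4 ^ k = w ^ 2 * Gd := by
    rw [hGd_def, addQ, mul_pow, powc Aw 2, powc yb 2, hAwQ, hybQ, hw2k]
    ring
  -- the two nontrivial components of G vanish
  have hsum2 : G1 + w * Gw + w ^ 2 * Gd = G1 + Gw + Gd := by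
    have h := hGQ
    rw [hGsum, addQ, addQ, hG1Q, hGwQ, hGdQ] at h
    exact h
  have hGwGd : Gw = w ^ 2 * Gd := by
    linear_combination w * hsum2 + (Gw + w * Gd + w * Gw) * h2 + (-Gw - w * Gd) * hw
  have hGd0 : Gd = 0 := by
    have h1 : (w ^ 2 * Gd) ^ 4 ^ k = w * (w ^ 2 * Gd) := by rw [← hGwGd]; exact hGwQ
    rw [mul_pow, hw2k, hGdQ] at h1
    have h2' : (w - 1) * Gd = 0 := by
      linear_combination h1 + (-Gd + 2 * (w * Gd) - w ^ 2 * Gd) * hw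
    rcases mul_eq_zero.mp h2' with h | h
    · exact absurd (by linear_combination h : w = 1) hwne1
    · exact h
  have hGw0 : Gw = 0 := by rw [hGwGd, hGd0, mul_zero]
  -- extract the linear relations (taking square roots)
  rw [hGd_def] at hGd0
  rw [hGw_def] at hGw0
  have hAwyb : Aw + w * yb = 0 := by
    have hsq : (Aw + w * yb) ^ 2 = 0 := by
      linear_combination hGd0 + (w * Aw * yb) * h2
    exact pow_eq_zero_iff (two_ne_zero) |>.mp hsq
  have hAdyd : Ad + w ^ 2 * yd = 0 := by
    have hsq : (Ad + w ^ 2 * yd) ^ 2 = 0 := by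
      linear_combination hGw0 + (-(Ad * yd) - w * Ad * yd) * h2 +
        (2 * (Ad * yd) - w * yd ^ 2 + w ^ 2 * yd ^ 2) * hw
    exact pow_eq_zero_iff (two_ne_zero) |>.mp hsq
  rw [hAw_def] at hAwyb
  rw [hAd_def] at hAdyd
  have hbyb : b = w * yb := by
    linear_combination w ^ 2 * hAwyb + (b - w * yb - w * b) * hw
  have hdyd : d = w ^ 2 * yd := by
    linear_combination w * hAdyd + (d - w * yd - w * d) * hw
  -- kill the ω-component
  have hybS : yb = w * S 4 k yb :=
    calc yb = S 4 k b := hyb_def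
      _ = S 4 k (w * yb) := by rw [hbyb]
      _ = w * S 4 k yb := S_smul _ _ _ hw4
  have hSyb : S 4 k yb = w ^ 2 * yb := by
    linear_combination -(w ^ 2) * hybS + (S 4 k yb - w * S 4 k yb) * hw
  have hyb4 : yb ^ 4 = 0 := by
    have hp4 := S_pow4 k yb
    rw [S_shift, hSyb, hybQ] at hp4
    linear_combination w * hp4 + (-(w * yb)) * h2 +
      (yb ^ 4 + w * yb - w * yb ^ 4 + w ^ 3 * yb ^ 4 - w ^ 4 * yb ^ 4 + w ^ 6 * yb ^ 4 -
        w ^ 7 * yb ^ 4) * hw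
  have hyb0 : yb = 0 := pow_eq_zero_iff (by norm_num : (4 : ℕ) ≠ 0) |>.mp hyb4
  have hb0 : b = 0 := by rw [hbyb, hyb0, mul_zero]
  -- kill the ω²-component
  have hydS : yd = w ^ 2 * S 4 k yd :=
    calc yd = S 4 k d := hyd_def
      _ = S 4 k (w ^ 2 * yd) := by rw [hdyd]
      _ = w ^ 2 * S 4 k yd := S_smul _ _ _ hw24
  have hSyd : S 4 k yd = w * yd := by
    linear_combination -w * hydS + (S 4 k yd - w * S 4 k yd) * hw
  have hyd4 : yd ^ 4 = 0 := by
    have hp4 := S_pow4 k yd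
    rw [S_shift, hSyd, hydQ] at hp4
    linear_combination w ^ 2 * hp4 + (yd + w * yd) * h2 +
      (-2 * yd + yd ^ 4 - w * yd ^ 4 + w ^ 2 * yd + w ^ 3 * yd ^ 4 - w ^ 4 * yd ^ 4) * hw
  have hyd0 : yd = 0 := pow_eq_zero_iff (by norm_num : (4 : ℕ) ≠ 0) |>.mp hyd4
  have hd0 : d = 0 := by rw [hdyd, hyd0, mul_zero]
  -- hence e is fixed by the Frobenius power
  have heE : e = e0 := by rw [hesum, hb0, hd0]; ring
  have heQ : E1 = e := by rw [hE1, heE, he0Q]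
  have hy4 : y ^ 4 = y := by
    have hp4 := S_pow4 k e
    rw [S_shift, ← hy_def, ← hE1, heQ] at hp4
    linear_combination hp4
  have hyQfix : y ^ 4 ^ k = y := fix4 y hy4 k
  have hc0 : c = 0 := by rw [hcs, hyQfix]; linear_combination y * h2
  have h40 : (0 : F) ^ 4 ^ k = 0 := zero_pow (by positivity)
  have hA0 : A = 0 := by
    have h := hE
    rw [hc0, h40] at h
    have hA2 : A ^ 2 = 0 := by linear_combination h
    exact pow_eq_zero_iff (by norm_num : (2 : ℕ) ≠ 0) |>.mp hA2
  have hey : e = y := by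
    have h := hAs
    rw [hA0, heQ] at h
    linear_combination -h - y * h2
  have hy00 : y = 0 := by
    have h := hy_def
    rw [hey, S_const k y hy4, hkF, zero_mul] at h
    exact h
  have he00 : e = 0 := by rw [hey, hy00]
  rw [he00, add_zero] at hx'
  exact hx'.symm
end

section
/- Let q be a power of 2, let k be a positive integer, and let F be a finite field with |F| = q^{3k}. Let K = {x ∈ F : x^{q^k} = x} be the subfield of F with q^k elements. Let L : F → F be induced by a 2-linearized polynomial over F, i.e., L(x) = Σ_i a_i x^{2^i} for some coefficients a_i ∈ F. Assume: (i) L maps K into K and restricts to a bijection of K, and (ii) for all x ∈ F, L(x) + L(x)^{q^{2k}} = S_{2k}(x)^2 + S_{2k}(x)^{2 q^{k+1}}. Then the map x ↦ L(x) + S_{2k}(x)^{q^k + 1} is a permutation of F. -/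
private lemma sum_range_add' {M : Type*} [AddCommMonoid M] (f : ℕ → M) (m n : ℕ) :
    ∑ i ∈ Finset.range (m + n), f i
      = (∑ i ∈ Finset.range m, f i) + ∑ i ∈ Finset.range n, f (m + i) := by
  induction n with
  | zero => simp
  | succ n ih =>
      rw [← Nat.add_assoc, Finset.sum_range_succ, ih, Finset.sum_range_succ, add_assoc]

theorem stmt_1 {F : Type*} [Field F] [Fintype F] (q n k : ℕ) (hn : 0 < n)
    (hq : q = 2 ^ n) (hk : 0 < k) (hF : Fintype.card F = q ^ (3 * k))
    (L : F → F)
    (hL : ∃ (N : ℕ) (a : ℕ → F), ∀ x : F, L x = ∑ i ∈ Finset.range N, a i * x ^ 2 ^ i)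
    (hK : Set.BijOn L {x : F | x ^ q ^ k = x} {x : F | x ^ q ^ k = x})
    (hLL : ∀ x : F, L x + (L x) ^ q ^ (2 * k)
      = S q (2 * k) x ^ 2 + S q (2 * k) x ^ (2 * q ^ (k + 1))) :
    Function.Bijective (fun x : F => L x + S q (2 * k) x ^ (q ^ k + 1)) := by
  subst hq
  -- characteristic 2
  haveI hchar2 : CharP F 2 := by
    have hchar := ringChar.charP F
    have hprime : (ringChar F).Prime := CharP.char_is_prime F (ringChar F)
    obtain ⟨m, -, hcard⟩ := FiniteField.card F (ringChar F)
    have hdvd : ringChar F ∣ 2 := by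
      have h1 : ringChar F ∣ ringChar F ^ (m : ℕ) := dvd_pow_self _ m.pos.ne'
      rw [← hcard, hF, ← pow_mul] at h1
      exact hprime.dvd_of_dvd_pow h1
    have : ringChar F = 2 :=
      ((Nat.prime_dvd_prime_iff_eq hprime Nat.prime_two).mp hdvd)
    exact this ▸ hchar
  haveI : Fact (Nat.Prime 2) := ⟨Nat.prime_two⟩
  haveI : ExpChar F 2 := ExpChar.prime Nat.prime_two
  -- Frobenius additivity for q-power exponents
  have hfrob_add : ∀ (t : ℕ) (a b : F),
      (a + b) ^ ((2:ℕ)^n) ^ t = a ^ ((2:ℕ)^n) ^ t + b ^ ((2:ℕ)^n) ^ t := by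
    intro t a b
    rw [← pow_mul 2 n t]
    exact add_pow_char_pow a b 2 (n*t)
  -- injectivity of 2-power maps
  have hinj2 : ∀ (M : ℕ) (a b : F), a ^ (2:ℕ) ^ M = b ^ (2:ℕ) ^ M → a = b := by
    intro M a b h
    have h0 : (a + b) ^ (2:ℕ) ^ M = 0 := by
      rw [add_pow_char_pow, h, CharTwo.add_self_eq_zero]
    have h1 : a + b = 0 := by
      have h2 : ((2:ℕ) ^ M) ≠ 0 := by positivity
      exact (pow_eq_zero_iff h2).mp h0
    have := eq_neg_of_add_eq_zero_left h1
    rwa [CharTwo.neg_eq] at this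
  -- S raised to q^t powers
  have hS_pow : ∀ (m t : ℕ) (z : F),
      (S ((2:ℕ)^n) m z) ^ ((2:ℕ)^n) ^ t
        = ∑ i ∈ Finset.range m, z ^ ((2:ℕ)^n) ^ (i + t) := by
    intro m t z
    rw [S, ← pow_mul 2 n t, sum_pow_char_pow]
    refine Finset.sum_congr rfl fun i _ => ?_
    rw [pow_mul 2 n t, ← pow_mul, ← pow_add]
  have hcard3 : ∀ z : F, z ^ ((2:ℕ)^n) ^ (3 * k) = z := by
    intro z
    rw [← hF]
    exact FiniteField.pow_card z
  have hT3 : ∀ (z : F) (i : ℕ), z ^ ((2:ℕ)^n) ^ (i + 3 * k) = z ^ ((2:ℕ)^n) ^ i := by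
    intro z i
    rw [pow_add, mul_comm, pow_mul, hcard3]
  -- key: u^{q^k} + u^{q^{2k}} = u for u = S q (2k) z
  have hcube : ∀ z : F,
      (S ((2:ℕ)^n) (2*k) z) ^ ((2:ℕ)^n) ^ k + (S ((2:ℕ)^n) (2*k) z) ^ ((2:ℕ)^n) ^ (2*k)
        = S ((2:ℕ)^n) (2*k) z := by
    intro z
    have hsplit : ∀ t : ℕ,
        ∑ i ∈ Finset.range (2*k), z ^ ((2:ℕ)^n) ^ (i + t)
          = (∑ i ∈ Finset.range k, z ^ ((2:ℕ)^n) ^ (i + t))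
            + ∑ i ∈ Finset.range k, z ^ ((2:ℕ)^n) ^ (i + (t + k)) := by
      intro t
      rw [two_mul, sum_range_add']
      congr 1
      refine Finset.sum_congr rfl fun i _ => ?_
      congr 2
      omega
    have hS0 : S ((2:ℕ)^n) (2*k) z = ∑ i ∈ Finset.range (2*k), z ^ ((2:ℕ)^n) ^ (i + 0) := by
      rw [S]; exact Finset.sum_congr rfl fun i _ => by rw [Nat.add_zero]
    rw [hS_pow, hS_pow, hS0, hsplit, hsplit, hsplit]
    have h30 : ∑ i ∈ Finset.range k, z ^ ((2:ℕ)^n) ^ (i + (2*k + k))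
        = ∑ i ∈ Finset.range k, z ^ ((2:ℕ)^n) ^ (i + 0) := by
      refine Finset.sum_congr rfl fun i _ => ?_
      rw [show i + (2*k + k) = i + 3*k by omega, hT3, Nat.add_zero]
    rw [h30]
    have hkk : ∑ i ∈ Finset.range k, z ^ ((2:ℕ)^n) ^ (i + (k + k))
        = ∑ i ∈ Finset.range k, z ^ ((2:ℕ)^n) ^ (i + 2*k) := by
      refine Finset.sum_congr rfl fun i _ => ?_
      congr 2; omega
    have h0k : ∑ i ∈ Finset.range k, z ^ ((2:ℕ)^n) ^ (i + (0 + k))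
        = ∑ i ∈ Finset.range k, z ^ ((2:ℕ)^n) ^ (i + k) := by
      refine Finset.sum_congr rfl fun i _ => ?_
      congr 2; omega
    have h2k0 : ∑ i ∈ Finset.range k, z ^ ((2:ℕ)^n) ^ (i + 0)
        = ∑ i ∈ Finset.range k, z ^ ((2:ℕ)^n) ^ i := by
      refine Finset.sum_congr rfl fun i _ => by rw [Nat.add_zero]
    rw [hkk, h0k]
    linear_combination CharTwo.add_self_eq_zero (∑ i ∈ Finset.range k, z ^ ((2:ℕ)^n) ^ (i + 2*k))
  -- main identity : f z + (f z)^{q^{2k}} = S^{2 q^{k+1}}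
  have hmain : ∀ z : F,
      (L z + S ((2:ℕ)^n) (2*k) z ^ (((2:ℕ)^n) ^ k + 1))
        + (L z + S ((2:ℕ)^n) (2*k) z ^ (((2:ℕ)^n) ^ k + 1)) ^ ((2:ℕ)^n) ^ (2*k)
        = S ((2:ℕ)^n) (2*k) z ^ (2 * ((2:ℕ)^n) ^ (k+1)) := by
    intro z
    have e1 : (L z + S ((2:ℕ)^n) (2*k) z ^ (((2:ℕ)^n) ^ k + 1)) ^ ((2:ℕ)^n) ^ (2*k)
        = (L z) ^ ((2:ℕ)^n) ^ (2*k)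
          + (S ((2:ℕ)^n) (2*k) z ^ (((2:ℕ)^n) ^ k + 1)) ^ ((2:ℕ)^n) ^ (2*k) :=
      hfrob_add _ _ _
    have e2 : (S ((2:ℕ)^n) (2*k) z ^ (((2:ℕ)^n) ^ k + 1)) ^ ((2:ℕ)^n) ^ (2*k)
        = S ((2:ℕ)^n) (2*k) z * (S ((2:ℕ)^n) (2*k) z) ^ ((2:ℕ)^n) ^ (2*k) := by
      rw [← pow_mul]
      have he : (((2:ℕ)^n) ^ k + 1) * ((2:ℕ)^n) ^ (2*k)
          = ((2:ℕ)^n) ^ (3*k) + ((2:ℕ)^n) ^ (2*k) := by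
        rw [add_mul, one_mul, ← pow_add]
        congr 2
        omega
      rw [he, pow_add, hcard3]
    have e3 : S ((2:ℕ)^n) (2*k) z ^ (((2:ℕ)^n) ^ k + 1)
        = S ((2:ℕ)^n) (2*k) z ^ (((2:ℕ)^n) ^ k) * S ((2:ℕ)^n) (2*k) z := by
      rw [pow_add, pow_one]
    have e4 := hcube z
    have e5 := hLL z
    rw [e1, e2, e3]
    linear_combination e5 + S ((2:ℕ)^n) (2*k) z * e4
      + CharTwo.add_self_eq_zero (S ((2:ℕ)^n) (2*k) z ^ 2)
  -- additivity of L and S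
  obtain ⟨N, c, hc⟩ := hL
  have hLadd : ∀ a b : F, L (a + b) = L a + L b := by
    intro a b
    rw [hc, hc, hc, ← Finset.sum_add_distrib]
    refine Finset.sum_congr rfl fun i _ => ?_
    rw [add_pow_char_pow, mul_add]
  have hL0 : L 0 = 0 := by
    rw [hc]
    refine Finset.sum_eq_zero fun i _ => ?_
    rw [zero_pow (by positivity), mul_zero]
  have hSadd : ∀ a b : F,
      S ((2:ℕ)^n) (2*k) (a + b) = S ((2:ℕ)^n) (2*k) a + S ((2:ℕ)^n) (2*k) b := by
    intro a b
    rw [S, S, S, ← Finset.sum_add_distrib]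
    exact Finset.sum_congr rfl fun i _ => hfrob_add i a b
  -- injectivity
  rw [← Finite.injective_iff_bijective]
  intro x y hxy
  have hxy' : L x + S ((2:ℕ)^n) (2*k) x ^ (((2:ℕ)^n) ^ k + 1)
      = L y + S ((2:ℕ)^n) (2*k) y ^ (((2:ℕ)^n) ^ k + 1) := hxy
  have h6 : S ((2:ℕ)^n) (2*k) x ^ (2 * ((2:ℕ)^n) ^ (k+1))
      = S ((2:ℕ)^n) (2*k) y ^ (2 * ((2:ℕ)^n) ^ (k+1)) := by
    rw [← hmain x, ← hmain y, hxy']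
  have hexp : 2 * ((2:ℕ)^n) ^ (k+1) = (2:ℕ) ^ (1 + n * (k+1)) := by
    rw [← pow_mul, pow_add, pow_one]
  have h7 : S ((2:ℕ)^n) (2*k) x = S ((2:ℕ)^n) (2*k) y := by
    refine hinj2 (1 + n * (k+1)) _ _ ?_
    rw [← hexp]
    exact h6
  have h8 : L x = L y := by
    rw [h7] at hxy'
    exact add_right_cancel hxy'
  -- d = x + y
  have hSd : S ((2:ℕ)^n) (2*k) (x + y) = 0 := by
    rw [hSadd, h7, CharTwo.add_self_eq_zero]
  have hLd : L (x + y) = 0 := by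
    rw [hLadd, h8, CharTwo.add_self_eq_zero]
  -- S_{2k}(d) = 0 implies d^{q^{2k}} = d
  have hd2k : (x + y) ^ ((2:ℕ)^n) ^ (2*k) = x + y := by
    have h9 := hS_pow (2*k) 1 (x + y)
    rw [hSd, zero_pow (by positivity)] at h9
    have h10 := Finset.sum_range_succ' (fun i => (x + y) ^ ((2:ℕ)^n) ^ i) (2*k)
    have h11 := Finset.sum_range_succ (fun i => (x + y) ^ ((2:ℕ)^n) ^ i) (2*k)
    have hSd' : ∑ i ∈ Finset.range (2*k), (x + y) ^ ((2:ℕ)^n) ^ i = 0 := by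
      rw [← hSd, S]
    have h9' : ∑ i ∈ Finset.range (2*k), (x + y) ^ ((2:ℕ)^n) ^ (i + 1) = 0 := h9.symm
    simp only [pow_zero, pow_one] at h10
    linear_combination h10 - h11 + h9' - hSd'
  -- hence d is in K
  have hdk : (x + y) ^ ((2:ℕ)^n) ^ k = x + y := by
    calc (x + y) ^ ((2:ℕ)^n) ^ k
        = ((x + y) ^ ((2:ℕ)^n) ^ (3*k)) ^ ((2:ℕ)^n) ^ k := by rw [hcard3]
      _ = (x + y) ^ (((2:ℕ)^n) ^ (3*k) * ((2:ℕ)^n) ^ k) := by rw [← pow_mul]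
      _ = (x + y) ^ (((2:ℕ)^n) ^ (2*k) * ((2:ℕ)^n) ^ (2*k)) := by
            rw [← pow_add, ← pow_add]; congr 2; omega
      _ = ((x + y) ^ ((2:ℕ)^n) ^ (2*k)) ^ ((2:ℕ)^n) ^ (2*k) := by rw [pow_mul]
      _ = x + y := by rw [hd2k, hd2k]
  have hdK : (x + y) ∈ {z : F | z ^ ((2:ℕ)^n) ^ k = z} := hdk
  have h0K : (0 : F) ∈ {z : F | z ^ ((2:ℕ)^n) ^ k = z} := by
    show (0:F) ^ ((2:ℕ)^n) ^ k = 0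
    exact zero_pow (by positivity)
  have hd0 : x + y = 0 := hK.injOn hdK h0K (by rw [hLd, hL0])
  have := eq_neg_of_add_eq_zero_left hd0
  rwa [CharTwo.neg_eq] at this
end

section
/- Let q = 4, let k be a positive even integer, and let F be a finite field with |F| = q^{3k}. Define g : F → F by g(x) = S_{k+1}(x)^2 + S_{2k}(x)^{q^k + 1}. Then for all x ∈ F, g(x) + g(x)^{q^{2k}} = S_{2k}(x)^{2 q^{k+1}}. -/
/-- `g x = S_{k+1}(x)^2 + S_{2k}(x)^{q^k+1}` with `q = 4`. -/
def g {F : Type*} [Field F] (k : ℕ) (x : F) : F :=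
  S 4 (k + 1) x ^ 2 + S 4 (2 * k) x ^ (4 ^ k + 1)

theorem stmt_4 {F : Type*} [Field F] [Fintype F] (k : ℕ) (hk : 0 < k) (hke : Even k)
    (hF : Fintype.card F = 4 ^ (3 * k)) :
    ∀ x : F, g k x + (g k x) ^ 4 ^ (2 * k) = S 4 (2 * k) x ^ (2 * 4 ^ (k + 1)) := by
  -- characteristic 2
  have h4 : ∀ j : ℕ, (4 : ℕ) ^ j = 2 ^ (2 * j) := by
    intro j; rw [show (4:ℕ) = 2 ^ 2 by norm_num, ← pow_mul]
  have hchar : CharP F 2 := by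
    obtain ⟨n, hp, hcard⟩ := FiniteField.card F (ringChar F)
    have heq : ringChar F ^ (n : ℕ) = 2 ^ (2 * (3 * k)) := by
      rw [← hcard, hF, h4]
    have hdvd : ringChar F ∣ 2 ^ (2 * (3 * k)) := by
      rw [← heq]; exact dvd_pow_self _ n.pos.ne'
    have h2 : ringChar F = 2 :=
      (Nat.prime_dvd_prime_iff_eq hp Nat.prime_two).mp (hp.dvd_of_dvd_pow hdvd)
    rw [← h2]; exact ringChar.charP F
  haveI := hchar
  intro x
  have hxcard : x ^ 4 ^ (3 * k) = x := by rw [← hF]; exact FiniteField.pow_card x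
  set P : ℕ → F := fun i => x ^ 4 ^ i with hP
  have hPred : ∀ i, P (i + 3 * k) = P i := by
    intro i
    simp only [hP]
    rw [show (4:ℕ) ^ (i + 3 * k) = 4 ^ (3 * k) * 4 ^ i by rw [← pow_add]; ring_nf,
      pow_mul, hxcard]
  have hpowS : ∀ m j : ℕ, (S 4 m x) ^ 4 ^ j = ∑ i ∈ Finset.Ico j (m + j), P i := by
    intro m j
    rw [S, h4, sum_pow_char_pow, Finset.sum_Ico_eq_sum_range]
    simp only [Nat.add_sub_cancel]
    apply Finset.sum_congr rfl
    intro i _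
    simp only [hP]
    rw [← h4, ← pow_mul, ← pow_add, Nat.add_comm j i]
  have hS : ∀ m : ℕ, S 4 m x = ∑ i ∈ Finset.Ico 0 m, P i := by
    intro m
    have := hpowS m 0
    simpa using this
  have hself : ∀ a : F, a + a = 0 := fun a => CharTwo.add_self_eq_zero a
  set A := S 4 (k + 1) x with hA
  set T := S 4 (2 * k) x with hT
  -- Lemma 1 : T^{4^k} + T^{4^{2k}} = T
  have lem1 : T ^ 4 ^ k + T ^ 4 ^ (2 * k) = T := by
    rw [hT, hpowS, hpowS, hS]
    have e1 : (2 * k + k) = 3 * k := by ring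
    have e2 : (2 * k + 2 * k) = 4 * k := by ring
    rw [e1, e2]
    have s1 : ∑ i ∈ Finset.Ico k (3 * k), P i
        = (∑ i ∈ Finset.Ico k (2 * k), P i) + ∑ i ∈ Finset.Ico (2 * k) (3 * k), P i := by
      rw [Finset.sum_Ico_consecutive] <;> omega
    have s2 : ∑ i ∈ Finset.Ico (2 * k) (4 * k), P i
        = (∑ i ∈ Finset.Ico (2 * k) (3 * k), P i) + ∑ i ∈ Finset.Ico 0 k, P i := by
      rw [← Finset.sum_Ico_consecutive P (show 2*k ≤ 3*k by omega) (show 3*k ≤ 4*k by omega)]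
      congr 1
      rw [Finset.sum_Ico_eq_sum_range, Finset.sum_Ico_eq_sum_range]
      have e3 : 4 * k - 3 * k = k := by omega
      rw [e3]
      simp only [Nat.sub_zero, Nat.zero_add]
      apply Finset.sum_congr rfl
      intro i _
      rw [show 3 * k + i = i + 3 * k by ring, hPred]
    have s3 : ∑ i ∈ Finset.Ico 0 (2 * k), P i
        = (∑ i ∈ Finset.Ico 0 k, P i) + ∑ i ∈ Finset.Ico k (2 * k), P i := by
      rw [Finset.sum_Ico_consecutive] <;> omega
    rw [s1, s2, s3]
    rw [show (∑ i ∈ Finset.Ico k (2*k), P i) + (∑ i ∈ Finset.Ico (2*k) (3*k), P i)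
        + ((∑ i ∈ Finset.Ico (2*k) (3*k), P i) + ∑ i ∈ Finset.Ico 0 k, P i)
        = (∑ i ∈ Finset.Ico 0 k, P i) + (∑ i ∈ Finset.Ico k (2*k), P i)
        + ((∑ i ∈ Finset.Ico (2*k) (3*k), P i) + (∑ i ∈ Finset.Ico (2*k) (3*k), P i)) by ring,
      hself, add_zero]
  -- Lemma 2 : A + A^{4^{2k}} + T = T^{4^{k+1}}
  have lem2 : A + A ^ 4 ^ (2 * k) + T = T ^ 4 ^ (k + 1) := by
    have hA' : A = ∑ i ∈ Finset.Ico 0 (k + 1), P i := by rw [hA, hS]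
    have hA2 : A ^ 4 ^ (2 * k) = (∑ i ∈ Finset.Ico (2 * k) (3 * k), P i) + P 0 := by
      rw [hA, hpowS]
      have e : k + 1 + 2 * k = 3 * k + 1 := by ring
      rw [e]
      rw [← Finset.sum_Ico_consecutive P (show 2*k ≤ 3*k by omega) (show 3*k ≤ 3*k+1 by omega)]
      congr 1
      rw [Finset.sum_Ico_eq_sum_range]
      simp only [Nat.add_sub_cancel_left, Finset.sum_range_one, Nat.add_zero]
      rw [show (3:ℕ) * k = 0 + 3 * k by omega, hPred]
    have hT' : T = (∑ i ∈ Finset.Ico 0 (k + 1), P i) + ∑ i ∈ Finset.Ico (k + 1) (2 * k), P i := by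
      rw [hT, hS, Finset.sum_Ico_consecutive] <;> omega
    have hTk1 : T ^ 4 ^ (k + 1)
        = (∑ i ∈ Finset.Ico (k + 1) (3 * k), P i) + P 0 := by
      rw [hT, hpowS]
      have e : 2 * k + (k + 1) = 3 * k + 1 := by ring
      rw [e]
      rw [← Finset.sum_Ico_consecutive P (show k+1 ≤ 3*k by omega) (show 3*k ≤ 3*k+1 by omega)]
      congr 1
      rw [Finset.sum_Ico_eq_sum_range]
      simp only [Nat.add_sub_cancel_left, Finset.sum_range_one, Nat.add_zero]
      rw [show (3:ℕ) * k = 0 + 3 * k by omega, hPred]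
    rw [hA2, hTk1, hA', hT',
      ← Finset.sum_Ico_consecutive P (show k+1 ≤ 2*k by omega) (show 2*k ≤ 3*k by omega)]
    rw [show (∑ i ∈ Finset.Ico 0 (k+1), P i) + ((∑ i ∈ Finset.Ico (2*k) (3*k), P i) + P 0)
        + ((∑ i ∈ Finset.Ico 0 (k+1), P i) + ∑ i ∈ Finset.Ico (k+1) (2*k), P i)
        = ((∑ i ∈ Finset.Ico 0 (k+1), P i) + (∑ i ∈ Finset.Ico 0 (k+1), P i))
        + ((∑ i ∈ Finset.Ico (k+1) (2*k), P i) + (∑ i ∈ Finset.Ico (2*k) (3*k), P i) + P 0)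
        by ring, hself, zero_add]
  -- main computation
  have hTcard : T ^ 4 ^ (3 * k) = T := by rw [← hF]; exact FiniteField.pow_card T
  have sq : ∀ a b : F, (a + b) ^ 2 = a ^ 2 + b ^ 2 := fun a b => CharTwo.add_sq a b
  have expand : g k x + (g k x) ^ 4 ^ (2 * k)
      = (A + A ^ 4 ^ (2 * k)) ^ 2 + T * (T ^ 4 ^ k + T ^ 4 ^ (2 * k)) := by
    rw [g, ← hA, ← hT, sq]
    have e1 : (A ^ 2 + T ^ (4 ^ k + 1)) ^ 4 ^ (2 * k)
        = (A ^ 4 ^ (2 * k)) ^ 2 + T * T ^ 4 ^ (2 * k) := by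
      rw [show (4:ℕ) ^ (2 * k) = 2 ^ (2 * (2 * k)) from h4 (2 * k), add_pow_char_pow]
      congr 1
      · rw [← pow_mul, ← pow_mul, mul_comm]
      · rw [← pow_mul, show (2:ℕ) ^ (2 * (2 * k)) = 4 ^ (2 * k) from (h4 (2 * k)).symm]
        have : (4 ^ k + 1) * 4 ^ (2 * k) = 4 ^ (3 * k) + 4 ^ (2 * k) := by
          rw [add_mul, one_mul, ← pow_add]
          congr 1
          ring
        rw [this, pow_add, hTcard]
    rw [e1]
    rw [show T ^ (4 ^ k + 1) = T * T ^ 4 ^ k by rw [pow_add, pow_one]; ring]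
    ring
  rw [expand, lem1]
  have key : (A + A ^ 4 ^ (2 * k)) ^ 2 + T * T = (A + A ^ 4 ^ (2 * k) + T) ^ 2 := by
    rw [sq (A + A ^ 4 ^ (2 * k)) T]; ring
  rw [key, lem2, ← pow_mul]
  congr 1
  ring
end

section
/- Let k be a positive even integer. In the polynomial ring F_2[X], the greatest common divisor of X^{k+1} + X^{k+2} + ... + X^{3k} and X^{3k} + 1 equals X^k + 1; equivalently, gcd(1 + X + X^2 + ... + X^{2k-1}, X^{3k} + 1) = X^k + 1 in F_2[X]. -/
open Polynomial

private lemma zmod2_eq_of_dvd_dvd {a b : (ZMod 2)[X]} (h1 : a ∣ b) (h2 : b ∣ a) :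
    a = b := by
  obtain ⟨u, hu⟩ := associated_of_dvd_dvd h1 h2
  obtain ⟨r, hr, hcr⟩ := Polynomial.isUnit_iff.mp u.isUnit
  have hr1 : r = 1 := by
    have key : ∀ s : ZMod 2, s ≠ 0 → s = 1 := by decide
    exact key r hr.ne_zero
  have hu1 : (u : (ZMod 2)[X]) = 1 := by rw [← hcr, hr1, map_one]
  rw [← hu, hu1, mul_one]

theorem stmt_9 (k : ℕ) (hk : 0 < k) (hke : Even k) :
    EuclideanDomain.gcd (∑ i ∈ Finset.Icc (k + 1) (3 * k), (X : (ZMod 2)[X]) ^ i)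
      ((X : (ZMod 2)[X]) ^ (3 * k) + 1) = (X : (ZMod 2)[X]) ^ k + 1 := by
  set x : (ZMod 2)[X] := X with hx
  have h2 : (2 : (ZMod 2)[X]) = 0 := CharTwo.two_eq_zero
  set T : (ZMod 2)[X] := ∑ i ∈ Finset.range k, x ^ i with hT
  set Q : (ZMod 2)[X] := x ^ (2*k) + x ^ k + 1 with hQ
  set A : (ZMod 2)[X] := ∑ i ∈ Finset.Icc (k + 1) (3 * k), x ^ i with hA
  set B : (ZMod 2)[X] := x ^ (3 * k) + 1 with hB
  -- key geometric sum identity: T * (x + 1) = x^k + 1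
  have hgeom : T * (x + 1) = x ^ k + 1 := by
    have hg := geom_sum_mul x k
    rw [CharTwo.sub_eq_add, CharTwo.sub_eq_add] at hg
    simpa [hT] using hg
  -- factorization of B
  have hBfac : B = (x ^ k + 1) * Q := by
    rw [hB, hQ]
    linear_combination (-(x^(2*k)) - x^k) * h2
  -- factorization of A
  have hS : (∑ i ∈ Finset.range (2*k), x ^ i) = (x ^ k + 1) * T := by
    have hx1 : x + 1 ≠ 0 := by simpa using Polynomial.X_add_C_ne_zero (1 : ZMod 2)
    apply mul_right_cancel₀ hx1
    have hg2 := geom_sum_mul x (2*k)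
    rw [CharTwo.sub_eq_add, CharTwo.sub_eq_add] at hg2
    rw [hg2, mul_assoc, hgeom]
    linear_combination (-(x^k)) * h2
  have hAfac : A = (x ^ k + 1) * (x ^ (k+1) * T) := by
    have h1 : A = ∑ i ∈ Finset.range (2*k), x ^ (k+1+i) := by
      rw [hA, ← Finset.Ico_add_one_right_eq_Icc, Finset.sum_Ico_eq_sum_range]
      have hn : 3*k+1-(k+1) = 2*k := by omega
      rw [hn]
    have h2' : ∑ i ∈ Finset.range (2*k), x ^ (k+1+i)
        = x^(k+1) * ∑ i ∈ Finset.range (2*k), x ^ i := by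
      rw [Finset.mul_sum]
      exact Finset.sum_congr rfl (fun i _ => by rw [pow_add])
    rw [h1, h2', hS]; ring
  -- coprimality
  have hc1 : IsCoprime x Q := by
    obtain ⟨m, hm⟩ : ∃ m, k = m + 1 := ⟨k - 1, by omega⟩
    refine ⟨x^m * (x^k + 1), 1, ?_⟩
    rw [hQ, hm]
    linear_combination (x^(2*(m+1)) + x^(m+1)) * h2
  have hxk : x ^ k = (x+1) * T + 1 := by linear_combination -hgeom - h2
  have hc2 : IsCoprime T Q := by
    refine ⟨(x+1)^2 * T + (x+1), 1, ?_⟩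
    rw [hQ, two_mul, pow_add, hxk]
    linear_combination ((x+1)^2*T^2 + 2*(x+1)*T + 1) * h2
  have hcop : IsCoprime (x^(k+1) * T) Q := (hc1.pow_left).mul_left hc2
  obtain ⟨u, v, huv⟩ := hcop
  have hcomb : u * A + v * B = x ^ k + 1 := by
    rw [hAfac, hBfac]; linear_combination (x^k+1) * huv
  have hd1 : (x ^ k + 1) ∣ EuclideanDomain.gcd A B :=
    EuclideanDomain.dvd_gcd ⟨_, hAfac⟩ ⟨_, hBfac⟩
  have hd2 : EuclideanDomain.gcd A B ∣ x ^ k + 1 := by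
    rw [← hcomb]
    exact dvd_add ((EuclideanDomain.gcd_dvd_left A B).mul_left u)
      ((EuclideanDomain.gcd_dvd_right A B).mul_left v)
  exact zmod2_eq_of_dvd_dvd hd2 hd1
end

section
/- Let q = 4 and let k be a positive even integer. Let K be a finite field with |K| = q^k. Then for every nonzero c ∈ K, c^{q^{2k+2}} + c^{q^{2k+3}} + ... + c^{q^{3k}} ≠ 0. Equivalently, the only element c ∈ K with S_{k-1}(c) = 0 is c = 0, where S_{k-1}(c) = c + c^q + ... + c^{q^{k-2}}. -/
theorem stmt_11 {K : Type*} [Field K] [Fintype K] (k : ℕ) (hk : 0 < k) (hke : Even k)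
    (hK : Fintype.card K = 4 ^ k) :
    ∀ c : K, c ≠ 0 → (∑ i ∈ Finset.Icc (2 * k + 2) (3 * k), c ^ 4 ^ i) ≠ 0 := by
  -- characteristic 2
  have h2 : (2 : K) = 0 := by
    have h := FiniteField.cast_card_eq_zero K
    rw [hK] at h
    push_cast at h
    have h4 : (4 : K) = 0 := pow_eq_zero_iff hk.ne' |>.mp h
    have h22 : (2 : K) ^ 2 = 0 := by rw [show ((2:K))^2 = 4 by norm_num, h4]
    exact pow_eq_zero_iff two_ne_zero |>.mp h22
  have hring : ringChar K = 2 := by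
    have hd : ringChar K ∣ 2 := ringChar.dvd (by exact_mod_cast h2)
    rcases (Nat.prime_two.eq_one_or_self_of_dvd _ hd) with h | h
    · exact absurd h (CharP.ringChar_ne_one)
    · exact h
  haveI hchar : CharP K 2 := hring ▸ ringChar.charP K
  haveI : Fact (Nat.Prime 2) := ⟨Nat.prime_two⟩
  -- Frobenius^2 : x ↦ x^4
  set φ : K →+* K := (frobenius K 2).comp (frobenius K 2) with hφ
  have hφdef : ∀ x : K, φ x = x ^ 4 := by
    intro x
    simp [hφ, frobenius_def, ← pow_mul]
  have hφinj : Function.Injective φ :=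
    (frobenius_inj K 2).comp (frobenius_inj K 2)
  intro c hc
  -- reduction mod k
  have ha : ∀ a : K, a ^ 4 ^ k = a := by
    intro a
    rw [← hK]; exact FiniteField.pow_card a
  have hred : ∀ i : ℕ, c ^ 4 ^ (i + k) = c ^ 4 ^ i := by
    intro i
    rw [pow_add, pow_mul, ha]
  set t : K := ∑ i ∈ Finset.range k, c ^ 4 ^ i with ht
  -- t is Frobenius-fixed: t^4 = t
  have htfix : t ^ 4 = t := by
    have h1 : t ^ 4 = ∑ i ∈ Finset.range k, c ^ 4 ^ (i + 1) := by
      rw [← hφdef, map_sum]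
      refine Finset.sum_congr rfl fun i _ => ?_
      rw [hφdef, ← pow_mul, ← pow_succ]
    have h2' : ∑ i ∈ Finset.range k, c ^ 4 ^ (i + 1) + c ^ 4 ^ 0
        = ∑ i ∈ Finset.range (k + 1), c ^ 4 ^ i :=
      (Finset.sum_range_succ' (fun i => c ^ 4 ^ i) k).symm
    have h3 : ∑ i ∈ Finset.range (k + 1), c ^ 4 ^ i = t + c := by
      rw [Finset.sum_range_succ, ha, ht]
    have h4 : t ^ 4 + c = t + c := by
      rw [h1, ← h3, ← h2']; norm_num
    exact add_right_cancel h4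
  -- the sum equals t + c^4
  have hS : ∑ i ∈ Finset.Icc (2 * k + 2) (3 * k), c ^ 4 ^ i = t + c ^ 4 := by
    have hicc : Finset.Icc (2 * k + 2) (3 * k)
        = Finset.map (addLeftEmbedding (2 * k)) (Finset.Icc 2 k) := by
      rw [Finset.map_add_left_Icc]
      congr 1
      omega
    have h1 : ∑ i ∈ Finset.Icc (2 * k + 2) (3 * k), c ^ 4 ^ i
        = ∑ j ∈ Finset.Icc 2 k, c ^ 4 ^ j := by
      rw [hicc, Finset.sum_map]
      refine Finset.sum_congr rfl fun j _ => ?_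
      have : addLeftEmbedding (2 * k) j = j + k + k := by
        simp [addLeftEmbedding]; ring
      rw [this, hred, hred]
    -- now compute ∑_{j ∈ Icc 2 k}
    have h2' : ∑ i ∈ Finset.Ico 0 2, c ^ 4 ^ i + ∑ i ∈ Finset.Ico 2 (k + 1), c ^ 4 ^ i
        = ∑ i ∈ Finset.Ico 0 (k + 1), c ^ 4 ^ i :=
      Finset.sum_Ico_consecutive _ (by omega) (by omega)
    have h3 : ∑ i ∈ Finset.Ico 0 2, c ^ 4 ^ i = c + c ^ 4 := by
      rw [show (2:ℕ) = 0 + 1 + 1 by rfl]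
      rw [Finset.sum_Ico_succ_top (by omega), Finset.sum_Ico_succ_top (by omega)]
      norm_num
    have h4 : ∑ i ∈ Finset.Ico 0 (k + 1), c ^ 4 ^ i = t + c := by
      rw [← Finset.range_eq_Ico, Finset.sum_range_succ, ha, ht]
    have h5 : Finset.Icc 2 k = Finset.Ico 2 (k + 1) := by
      rw [Finset.Ico_add_one_right_eq_Icc]
    rw [h1, h5]
    have h6 : (c + c ^ 4) + ∑ i ∈ Finset.Ico 2 (k + 1), c ^ 4 ^ i = t + c := by
      rw [← h3, h2', h4]
    -- cancel c, use char 2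
    have h7 : ∑ i ∈ Finset.Ico 2 (k + 1), c ^ 4 ^ i = t - c ^ 4 := by
      linear_combination h6
    rw [h7, sub_eq_add_neg, CharTwo.neg_eq]
  rw [hS]
  intro habs
  have htc : t = c ^ 4 := by
    have := neg_eq_of_add_eq_zero_left habs
    rw [CharTwo.neg_eq] at this
    exact this.symm
  -- c^4 is Frobenius-fixed, hence c^4 = c
  have hc4 : c ^ 4 = c := by
    apply hφinj
    rw [hφdef, hφdef, ← htc, htfix, htc]
  -- then every c^(4^i) = c, so t = k • c = 0
  have hci : ∀ i : ℕ, c ^ 4 ^ i = c := by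
    intro i
    induction i with
    | zero => simp
    | succ n ih => rw [pow_succ, pow_mul, ih, hc4]
  have htk : t = 0 := by
    rw [ht]
    rw [Finset.sum_congr rfl fun i _ => hci i, Finset.sum_const, Finset.card_range]
    obtain ⟨m, hm⟩ := hke
    rw [hm]
    rw [show m + m = 2 * m by ring, mul_nsmul, two_nsmul]
    rw [← two_mul, h2, zero_mul, smul_zero]
  rw [htk] at htc
  exact hc (pow_eq_zero_iff (by norm_num) |>.mp htc.symm)
end

section
/- Let q = 4, let k be a positive even integer, and let F be a finite field with |F| = q^{3k}. Define g : F → F by g(x) = S_{k+1}(x)^2 + S_{2k}(x)^{q^k+1}. Suppose a ∈ F is nonzero and satisfies a + a^{q^k} + a^{q^{2k}} = 0. Then the number of x ∈ F with Tr(a·g(x)) = 0 equals the number of x ∈ F with Tr(a·g(x)) = 1, where Tr denotes the absolute trace from F to F_2. -/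
theorem stmt_13 {F : Type*} [Field F] [Fintype F] [Algebra (ZMod 2) F]
    (k : ℕ) (hk : 0 < k) (hke : Even k) (hF : Fintype.card F = 4 ^ (3 * k))
    (a : F) (ha0 : a ≠ 0) (ha : a + a ^ 4 ^ k + a ^ 4 ^ (2 * k) = 0) :
    Nat.card {x : F // Algebra.trace (ZMod 2) F (a * g k x) = 0}
      = Nat.card {x : F // Algebra.trace (ZMod 2) F (a * g k x) = 1} := by
  haveI : Fact (Nat.Prime 2) := ⟨Nat.prime_two⟩
  haveI hch : CharP F 2 := charP_of_injective_algebraMap (algebraMap (ZMod 2) F).injective 2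
  haveI : Module.Finite (ZMod 2) F := Module.Finite.of_finite
  obtain ⟨m, rfl⟩ : ∃ m, k = m + 1 := ⟨k - 1, by omega⟩
  clear hk hke
  set tr := Algebra.trace (ZMod 2) F with htrdef
  -- basic exponent tools
  have hp4 : ∀ (z : F) (i j : ℕ), (z ^ (4:ℕ) ^ i) ^ (4:ℕ) ^ j = z ^ (4:ℕ) ^ (i + j) := by
    intro z i j; rw [← pow_mul, ← pow_add]
  have h42 : ∀ j : ℕ, (4:ℕ) ^ j = 2 ^ (2 * j) := by
    intro j; rw [pow_mul]; norm_num
  have hadd : ∀ (x y : F) (j : ℕ), (x + y) ^ (4:ℕ) ^ j = x ^ (4:ℕ) ^ j + y ^ (4:ℕ) ^ j := by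
    intro x y j; rw [h42]; exact add_pow_char_pow x y 2 (2*j)
  have hsum : ∀ (n : ℕ) (x : F) (j : ℕ),
      (S 4 n x) ^ (4:ℕ) ^ j = ∑ i ∈ Finset.range n, x ^ (4:ℕ) ^ (i + j) := by
    intro n x j
    show (∑ i ∈ Finset.range n, x ^ (4:ℕ) ^ i) ^ (4:ℕ) ^ j = _
    rw [h42, sum_pow_char_pow]
    exact Finset.sum_congr rfl fun i _ => by rw [← h42, hp4]
  have hcard : ∀ z : F, z ^ (4:ℕ) ^ (3 * (m+1)) = z := by
    intro z; rw [← hF]; exact FiniteField.pow_card z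
  have hred : ∀ (z : F) (j : ℕ), z ^ (4:ℕ) ^ (3 * (m+1) + j) = z ^ (4:ℕ) ^ j := by
    intro z j; rw [← hp4 z (3*(m+1)) j, hcard z]
  -- trace tools
  have htr2 : ∀ z : F, tr (z ^ 2) = tr z := by
    intro z
    apply (algebraMap (ZMod 2) F).injective
    calc algebraMap (ZMod 2) F (tr (z^2))
        = ∑ σ : F ≃ₐ[ZMod 2] F, σ (z^2) := trace_eq_sum_automorphisms _
      _ = ∑ σ : F ≃ₐ[ZMod 2] F, (σ z)^2 := by simp [map_pow]
      _ = (∑ σ : F ≃ₐ[ZMod 2] F, σ z) ^ 2 := by rw [sum_pow_char]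
      _ = (algebraMap (ZMod 2) F (tr z)) ^ 2 := by rw [trace_eq_sum_automorphisms]
      _ = algebraMap (ZMod 2) F ((tr z) ^ 2) := by rw [map_pow]
      _ = algebraMap (ZMod 2) F (tr z) := by rw [ZMod.pow_card (tr z)]
  have htrp : ∀ (j : ℕ) (z : F), tr (z ^ (2:ℕ) ^ j) = tr z := by
    intro j
    induction j with
    | zero => intro z; simp
    | succ n ih => intro z; rw [pow_succ, pow_mul, htr2, ih]
  have htr4 : ∀ (j : ℕ) (z : F), tr (z ^ (4:ℕ) ^ j) = tr z := by
    intro j z; rw [h42, htrp]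
  have h2 : ∀ u : F, u + u = 0 := fun u => by
    rw [← two_mul, CharTwo.two_eq_zero, zero_mul]
  -- square root of a
  have hα2 : (a ^ (2:ℕ) ^ (6*m+5)) ^ 2 = a := by
    rw [← pow_mul, ← pow_succ]
    rw [show (2:ℕ) ^ (6*m+5+1) = 4 ^ (3*(m+1)) from by rw [h42]; congr 1; ring]
    exact hcard a
  set α := a ^ (2:ℕ) ^ (6*m+5) with hαdef
  have hα0 : α ≠ 0 := pow_ne_zero _ ha0
  -- key identity : tr (a * g x) = tr (α * (S_{2k} x + x^{4^k}))
  have hu : ∀ x : F, S 4 (2*(m+1)) x = S 4 (m+1) x + (S 4 (m+1) x) ^ (4:ℕ) ^ (m+1) := by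
    intro x
    show (∑ i ∈ Finset.range (2*(m+1)), x ^ (4:ℕ) ^ i) = _
    rw [two_mul, Finset.sum_range_add, hsum]
    have : ∑ i ∈ Finset.range (m+1), x ^ (4:ℕ) ^ ((m+1)+i)
        = ∑ i ∈ Finset.range (m+1), x ^ (4:ℕ) ^ (i+(m+1)) :=
      Finset.sum_congr rfl fun i _ => by rw [Nat.add_comm]
    rw [this]
    rfl
  have hv : ∀ x : F, S 4 ((m+1)+1) x = S 4 (m+1) x + x ^ (4:ℕ) ^ (m+1) := by
    intro x
    show (∑ i ∈ Finset.range ((m+1)+1), x ^ (4:ℕ) ^ i) = _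
    rw [Finset.sum_range_succ]
    rfl
  have hkey : ∀ x : F, tr (a * g (m+1) x)
      = tr (α * (S 4 (2*(m+1)) x + x ^ (4:ℕ) ^ (m+1))) := by
    intro x
    have e1 : tr (a * (S 4 ((m+1)+1) x) ^ 2) = tr (α * S 4 ((m+1)+1) x) := by
      rw [show a * (S 4 ((m+1)+1) x) ^ 2 = (α * S 4 ((m+1)+1) x) ^ 2 from by
        rw [mul_pow, hα2]]
      exact htr2 _
    have e2 : tr (a * (S 4 (2*(m+1)) x) ^ ((4:ℕ) ^ (m+1) + 1))
        = tr (α * (S 4 (m+1) x) ^ (4:ℕ) ^ (m+1)) := by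
      rw [hu x]
      rw [pow_succ, hadd]
      rw [hp4 (S 4 (m+1) x) (m+1) (m+1)]
      rw [show (m+1)+(m+1) = 2*(m+1) from by ring]
      have hexp : a * (((S 4 (m+1) x) ^ (4:ℕ)^(m+1) + (S 4 (m+1) x) ^ (4:ℕ)^(2*(m+1)))
            * (S 4 (m+1) x + (S 4 (m+1) x) ^ (4:ℕ)^(m+1)))
          = a * (S 4 (m+1) x * (S 4 (m+1) x) ^ (4:ℕ)^(m+1))
            + (α * (S 4 (m+1) x) ^ (4:ℕ)^(m+1)) ^ 2
            + a * (S 4 (m+1) x * (S 4 (m+1) x) ^ (4:ℕ)^(2*(m+1)))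
            + a * ((S 4 (m+1) x) ^ (4:ℕ)^(m+1) * (S 4 (m+1) x) ^ (4:ℕ)^(2*(m+1))) := by
        rw [mul_pow, hα2]; ring
      rw [hexp, map_add, map_add, map_add]
      have t2 : tr ((α * (S 4 (m+1) x) ^ (4:ℕ)^(m+1)) ^ 2)
          = tr (α * (S 4 (m+1) x) ^ (4:ℕ)^(m+1)) := htr2 _
      have t3 : tr (a * (S 4 (m+1) x * (S 4 (m+1) x) ^ (4:ℕ)^(2*(m+1))))
          = tr (a ^ (4:ℕ)^(m+1) * (S 4 (m+1) x * (S 4 (m+1) x) ^ (4:ℕ)^(m+1))) := by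
        have hstep : (a * (S 4 (m+1) x * (S 4 (m+1) x) ^ (4:ℕ)^(2*(m+1)))) ^ (4:ℕ)^(m+1)
            = a ^ (4:ℕ)^(m+1) * (S 4 (m+1) x * (S 4 (m+1) x) ^ (4:ℕ)^(m+1)) := by
          rw [mul_pow, mul_pow, hp4 (S 4 (m+1) x) (2*(m+1)) (m+1)]
          rw [show 2*(m+1)+(m+1) = 3*(m+1) from by ring, hcard]
          ring
        rw [← hstep, htr4]
      have t4 : tr (a * ((S 4 (m+1) x) ^ (4:ℕ)^(m+1) * (S 4 (m+1) x) ^ (4:ℕ)^(2*(m+1))))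
          = tr (a ^ (4:ℕ)^(2*(m+1)) * (S 4 (m+1) x * (S 4 (m+1) x) ^ (4:ℕ)^(m+1))) := by
        have hstep : (a * ((S 4 (m+1) x) ^ (4:ℕ)^(m+1) * (S 4 (m+1) x) ^ (4:ℕ)^(2*(m+1)))) ^ (4:ℕ)^(2*(m+1))
            = a ^ (4:ℕ)^(2*(m+1)) * (S 4 (m+1) x * (S 4 (m+1) x) ^ (4:ℕ)^(m+1)) := by
          rw [mul_pow, mul_pow, hp4 (S 4 (m+1) x) (m+1) (2*(m+1)),
            hp4 (S 4 (m+1) x) (2*(m+1)) (2*(m+1))]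
          rw [show (m+1)+2*(m+1) = 3*(m+1) from by ring, hcard]
          rw [show 2*(m+1)+2*(m+1) = 3*(m+1)+(m+1) from by ring, hred]
          try ring
        rw [← hstep, htr4]
      have hsum0 : tr (a * (S 4 (m+1) x * (S 4 (m+1) x) ^ (4:ℕ)^(m+1)))
          + tr (a ^ (4:ℕ)^(m+1) * (S 4 (m+1) x * (S 4 (m+1) x) ^ (4:ℕ)^(m+1)))
          + tr (a ^ (4:ℕ)^(2*(m+1)) * (S 4 (m+1) x * (S 4 (m+1) x) ^ (4:ℕ)^(m+1))) = 0 := by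
        rw [← map_add, ← map_add, ← add_mul, ← add_mul, ha, zero_mul, map_zero]
      rw [t2, t3, t4]
      linear_combination hsum0
    show tr (a * (S 4 ((m+1)+1) x ^ 2 + S 4 (2*(m+1)) x ^ (4 ^ (m+1) + 1))) = _
    rw [mul_add, map_add, e1, e2, ← map_add, ← mul_add]
    have : α * (S 4 ((m+1)+1) x + (S 4 (m+1) x) ^ (4:ℕ) ^ (m+1))
        = α * (S 4 (2*(m+1)) x + x ^ (4:ℕ) ^ (m+1)) := by
      rw [hv, hu]; ring
    rw [this]
  -- additivity of M
  have hMadd : ∀ x x' : F, S 4 (2*(m+1)) (x + x') + (x + x') ^ (4:ℕ) ^ (m+1)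
      = (S 4 (2*(m+1)) x + x ^ (4:ℕ) ^ (m+1)) + (S 4 (2*(m+1)) x' + x' ^ (4:ℕ) ^ (m+1)) := by
    intro x x'
    have : S 4 (2*(m+1)) (x + x') = S 4 (2*(m+1)) x + S 4 (2*(m+1)) x' := by
      show (∑ i ∈ Finset.range (2*(m+1)), (x + x') ^ (4:ℕ) ^ i) = _
      rw [Finset.sum_congr rfl fun i _ => hadd x x' i, Finset.sum_add_distrib]
      rfl
    rw [this, hadd]
    ring
  -- explicit inverse of M
  have hMR : ∀ w : F,
      S 4 (2*(m+1)) (w ^ (4:ℕ)^(3*m+2) + w ^ (4:ℕ)^(2*m+2) + w ^ (4:ℕ)^m)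
      + (w ^ (4:ℕ)^(3*m+2) + w ^ (4:ℕ)^(2*m+2) + w ^ (4:ℕ)^m) ^ (4:ℕ)^(m+1) = w := by
    intro w
    have hRi : ∀ i : ℕ, (w ^ (4:ℕ)^(3*m+2) + w ^ (4:ℕ)^(2*m+2) + w ^ (4:ℕ)^m) ^ (4:ℕ)^i
        = w ^ (4:ℕ)^(3*m+2+i) + w ^ (4:ℕ)^(2*m+2+i) + w ^ (4:ℕ)^(m+i) := by
      intro i; rw [hadd, hadd, hp4, hp4, hp4]
    have hS : S 4 (2*(m+1)) (w ^ (4:ℕ)^(3*m+2) + w ^ (4:ℕ)^(2*m+2) + w ^ (4:ℕ)^m)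
        = (∑ i ∈ Finset.range (2*(m+1)), w ^ (4:ℕ)^(3*m+2+i))
          + (∑ i ∈ Finset.range (2*(m+1)), w ^ (4:ℕ)^(2*m+2+i))
          + (∑ i ∈ Finset.range (2*(m+1)), w ^ (4:ℕ)^(m+i)) := by
      show (∑ i ∈ Finset.range (2*(m+1)), (w ^ (4:ℕ)^(3*m+2) + w ^ (4:ℕ)^(2*m+2) + w ^ (4:ℕ)^m) ^ (4:ℕ)^i) = _
      rw [Finset.sum_congr rfl fun i _ => hRi i, Finset.sum_add_distrib, Finset.sum_add_distrib]
    have i1 : (∑ i ∈ Finset.range (2*(m+1)), w ^ (4:ℕ)^(3*m+2+i))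
        = ((∑ i ∈ Finset.range (m+1), w ^ (4:ℕ)^i)
          + ∑ i ∈ Finset.range m, w ^ (4:ℕ)^(m+1+i)) + w ^ (4:ℕ)^(3*m+2) := by
      have a1 : ∑ i ∈ Finset.range (2*m+1), w ^ (4:ℕ)^(3*m+2+(i+1))
          = ∑ i ∈ Finset.range (2*m+1), w ^ (4:ℕ)^i :=
        Finset.sum_congr rfl fun i _ => by
          rw [show 3*m+2+(i+1) = 3*(m+1)+i from by ring, hred w i]
      rw [show 2*(m+1) = (2*m+1)+1 from by ring, Finset.sum_range_succ', a1,
        show 2*m+1 = (m+1)+m from by ring, Finset.sum_range_add]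
      try simp only [Nat.add_zero]
    have i2 : (∑ i ∈ Finset.range (2*(m+1)), w ^ (4:ℕ)^(2*m+2+i))
        = ((∑ i ∈ Finset.range m, w ^ (4:ℕ)^(2*m+2+i)) + w ^ (4:ℕ)^(3*m+2))
          + (∑ i ∈ Finset.range (m+1), w ^ (4:ℕ)^i) := by
      have b2 : ∑ i ∈ Finset.range (m+1), w ^ (4:ℕ)^(2*m+2+((m+1)+i))
          = ∑ i ∈ Finset.range (m+1), w ^ (4:ℕ)^i :=
        Finset.sum_congr rfl fun i _ => by
          rw [show 2*m+2+((m+1)+i) = 3*(m+1)+i from by ring, hred w i]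
      rw [show 2*(m+1) = (m+1)+(m+1) from by ring, Finset.sum_range_add, b2,
        Finset.sum_range_succ, show 2*m+2+m = 3*m+2 from by ring]
    have i3 : (∑ i ∈ Finset.range (2*(m+1)), w ^ (4:ℕ)^(m+i))
        = ((∑ i ∈ Finset.range m, w ^ (4:ℕ)^(m+1+i)) + w ^ (4:ℕ)^m)
          + ((∑ i ∈ Finset.range m, w ^ (4:ℕ)^(2*m+2+i)) + w ^ (4:ℕ)^(2*m+1)) := by
      have a3 : ∑ i ∈ Finset.range m, w ^ (4:ℕ)^(m+(i+1))
          = ∑ i ∈ Finset.range m, w ^ (4:ℕ)^(m+1+i) :=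
        Finset.sum_congr rfl fun i _ => by rw [show m+(i+1) = m+1+i from by ring]
      have b3 : ∑ i ∈ Finset.range (m+1), w ^ (4:ℕ)^(m+((m+1)+i))
          = ∑ i ∈ Finset.range (m+1), w ^ (4:ℕ)^(2*m+1+i) :=
        Finset.sum_congr rfl fun i _ => by rw [show m+((m+1)+i) = 2*m+1+i from by ring]
      have b3' : ∑ i ∈ Finset.range m, w ^ (4:ℕ)^(2*m+1+(i+1))
          = ∑ i ∈ Finset.range m, w ^ (4:ℕ)^(2*m+2+i) :=
        Finset.sum_congr rfl fun i _ => by rw [show 2*m+1+(i+1) = 2*m+2+i from by ring]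
      rw [show 2*(m+1) = (m+1)+(m+1) from by ring, Finset.sum_range_add, b3,
        Finset.sum_range_succ', Finset.sum_range_succ', a3, b3']
      try simp only [Nat.add_zero]
    have hlast : (w ^ (4:ℕ)^(3*m+2) + w ^ (4:ℕ)^(2*m+2) + w ^ (4:ℕ)^m) ^ (4:ℕ)^(m+1)
        = w ^ (4:ℕ)^m + w + w ^ (4:ℕ)^(2*m+1) := by
      rw [hRi (m+1)]
      rw [show 3*m+2+(m+1) = 3*(m+1)+m from by ring, hred w m]
      rw [show 2*m+2+(m+1) = 3*(m+1)+0 from by ring, hred w 0]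
      rw [show m+(m+1) = 2*m+1 from by ring]
      norm_num
    rw [hS, i1, i2, i3, hlast]
    linear_combination h2 (∑ i ∈ Finset.range (m+1), w ^ (4:ℕ)^i)
      + h2 (∑ i ∈ Finset.range m, w ^ (4:ℕ)^(m+1+i))
      + h2 (∑ i ∈ Finset.range m, w ^ (4:ℕ)^(2*m+2+i))
      + h2 (w ^ (4:ℕ)^m) + h2 (w ^ (4:ℕ)^(2*m+1)) + h2 (w ^ (4:ℕ)^(3*m+2))
  -- pick the translation point
  obtain ⟨y, hy⟩ := Algebra.trace_surjective (ZMod 2) F 1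
  set w₀ := α⁻¹ * y with hw₀def
  set x₀ := w₀ ^ (4:ℕ)^(3*m+2) + w₀ ^ (4:ℕ)^(2*m+2) + w₀ ^ (4:ℕ)^m with hx₀def
  have hMx₀ : S 4 (2*(m+1)) x₀ + x₀ ^ (4:ℕ)^(m+1) = w₀ := hMR w₀
  have htrx₀ : tr (α * w₀) = 1 := by
    rw [hw₀def, ← mul_assoc, mul_inv_cancel₀ hα0, one_mul]
    exact hy
  have hshift : ∀ x : F, tr (a * g (m+1) (x + x₀)) = tr (a * g (m+1) x) + 1 := by
    intro x
    rw [hkey, hkey x, hMadd, hMx₀, mul_add, map_add, htrx₀]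
  -- conclude by a bijection
  have hinv : ∀ x : F, (x + x₀) + x₀ = x := by
    intro x; rw [add_assoc, h2, add_zero]
  have hbij : {x : F // tr (a * g (m+1) x) = 0} ≃ {x : F // tr (a * g (m+1) x) = 1} :=
    { toFun := fun p => ⟨p.1 + x₀, by rw [hshift, p.2, zero_add]⟩
      invFun := fun p => ⟨p.1 + x₀, by rw [hshift, p.2, one_add_one_eq_two]; exact CharTwo.two_eq_zero⟩
      left_inv := fun p => Subtype.ext (hinv p.1)
      right_inv := fun p => Subtype.ext (hinv p.1) }
  exact Nat.card_congr hbij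
end
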